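/- If there exists a nontrivial f-pyramidal Steiner triple system STS(v) over an abelian group G (with 0 < f < v), then G has order v − f, f equals the number of involutions of G, f = 2^m − 1 for some m ≥ 1, and v − 2f − 1 ≡ 0 (mod 6) whenever the associated difference family is relative to a partial spread of type {2^f, 3^0}. -/

import Mathlib

open scoped Classical

/-- The multiset of differences of a triple (finite subset) of an abelian group. -/
noncomputable def tripleDiffs {G : Type*} [AddCommGroup G] (T : Finset G) : Multiset G :=
  ((T ×ˢ T).filter (fun p => p.1 ≠ p.2)).val.map (fun p => p.1 - p.2)

/-- The multiset of differences of a family of triples. -/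
noncomputable def famDiffs {G : Type*} [AddCommGroup G] (F : Finset (Finset G)) : Multiset G :=
  F.val.bind tripleDiffs

/-!
Fix a point `x₀` that is not fixed by `G`. Sharp transitivity makes `g ↦ g +ᵥ x₀` a bijection
from `G` onto the non-fixed points, so `|G| = v - f`, and every non-fixed point has trivial
stabiliser.

If `p` is fixed, write the third point of the block through `p` and `x₀` as `g +ᵥ x₀`. Then `g`
fixes `p` and moves `x₀` into the block, so it stabilises the block; as `g +ᵥ (g +ᵥ x₀)` is
neither `p` nor `g +ᵥ x₀`, it is `x₀`, and `g` is an involution. Conversely an involution `g`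
swaps `x₀` and `g +ᵥ x₀`, so it fixes the third point of their block, which is therefore a fixed
point. This matches fixed points with involutions. Together with `0` the involutions form the
`2`-torsion subgroup, a vector space over `ZMod 2`, so `f + 1` is a power of `2`.

Finally the `6 |F|` differences of `F` are the `|G| - 1 - f` elements outside the spread.
-/

open Finset AddAction

structure IsSteinerTripleSystem {V : Type*} (B : Finset (Finset V)) : Prop where
  card_eq_three : ∀ b ∈ B, #b = 3
  existsUnique_block : ∀ x y : V, x ≠ y → ∃! b, b ∈ B ∧ x ∈ b ∧ y ∈ b

def OnCommonBlock {V : Type*} (B : Finset (Finset V)) (x y z : V) : Prop :=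
  ∃ b ∈ B, x ∈ b ∧ y ∈ b ∧ z ∈ b

theorem Finset.existsUnique_mem_ne_ne_of_card_eq_three {V : Type*} [DecidableEq V]
    {b : Finset V} (hb : #b = 3) {x y : V} (hx : x ∈ b) (hy : y ∈ b) (hxy : x ≠ y) :
    ∃! z, z ∈ b ∧ z ≠ x ∧ z ≠ y := by
  obtain ⟨z, hz⟩ : ∃ z, b \ {x, y} = {z} := card_eq_one.mp <| by
    rw [card_sdiff_of_subset (by simp [insert_subset_iff, hx, hy]), hb, card_pair hxy]
  have hmem (w : V) : w ∈ b ∧ w ≠ x ∧ w ≠ y ↔ w = z := by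
    simpa [and_assoc] using congrArg (w ∈ ·) hz
  exact ⟨z, (hmem z).2 rfl, fun w hw => (hmem w).1 hw⟩

section SteinerTripleSystem

variable {V : Type*} {B : Finset (Finset V)}

theorem IsSteinerTripleSystem.block_eq (hB : IsSteinerTripleSystem B) {x y : V} (hxy : x ≠ y)
    {b b' : Finset V} (hb : b ∈ B) (hx : x ∈ b) (hy : y ∈ b)
    (hb' : b' ∈ B) (hx' : x ∈ b') (hy' : y ∈ b') : b = b' :=
  (hB.existsUnique_block x y hxy).unique ⟨hb, hx, hy⟩ ⟨hb', hx', hy'⟩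

theorem IsSteinerTripleSystem.eq_of_mem_of_mem [DecidableEq V] (hB : IsSteinerTripleSystem B)
    {x y z w : V} (hxy : x ≠ y) {b b' : Finset V}
    (hb : b ∈ B) (hx : x ∈ b) (hy : y ∈ b) (hz : z ∈ b)
    (hb' : b' ∈ B) (hx' : x ∈ b') (hy' : y ∈ b') (hw : w ∈ b')
    (hzx : z ≠ x) (hzy : z ≠ y) (hwx : w ≠ x) (hwy : w ≠ y) : z = w := by
  obtain rfl := hB.block_eq hxy hb hx hy hb' hx' hy'
  exact (existsUnique_mem_ne_ne_of_card_eq_three (hB.card_eq_three b hb) hx hy hxy).unique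
    ⟨hz, hzx, hzy⟩ ⟨hw, hwx, hwy⟩

theorem IsSteinerTripleSystem.vadd_mem [DecidableEq V] {G : Type*} [AddGroup G] [AddAction G V]
    (hB : IsSteinerTripleSystem B) (hAut : ∀ g : G, ∀ b ∈ B, b.image (fun x => g +ᵥ x) ∈ B)
    {g : G} {b : Finset V} (hb : b ∈ B) {x y z : V} (hxy : x ≠ y) (hx : x ∈ b) (hy : y ∈ b)
    (hgx : g +ᵥ x ∈ b) (hgy : g +ᵥ y ∈ b) (hz : z ∈ b) : g +ᵥ z ∈ b := by
  have hgb : b.image (fun x => g +ᵥ x) = b :=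
    hB.block_eq ((AddAction.injective g).ne hxy) (hAut g b hb) (mem_image_of_mem _ hx)
      (mem_image_of_mem _ hy) hb hgx hgy
  exact hgb ▸ mem_image_of_mem _ hz

end SteinerTripleSystem

section FixedPoints

variable {G V : Type*} [AddGroup G] [AddAction G V]

theorem vadd_notMem_fixedPoints {x : V} (hx : x ∉ fixedPoints G V) (g : G) :
    g +ᵥ x ∉ fixedPoints G V := by
  intro hgx
  have hx' : x = g +ᵥ x := by simpa using hgx (-g)
  rw [hx'] at hx
  exact hx hgx

theorem vadd_ne_of_mem_fixedPoints {x p : V} (hx : x ∉ fixedPoints G V)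
    (hp : p ∈ fixedPoints G V) (g : G) : g +ᵥ x ≠ p :=
  (ne_of_mem_of_not_mem hp (vadd_notMem_fixedPoints hx g)).symm

variable (G V) in
def SharplyTransitiveOffFixedPoints : Prop :=
  ∀ x y : V, x ∉ fixedPoints G V → y ∉ fixedPoints G V → ∃! g : G, g +ᵥ x = y

namespace SharplyTransitiveOffFixedPoints

theorem eq_zero_of_vadd_eq_self (hsharp : SharplyTransitiveOffFixedPoints G V) {x : V}
    (hx : x ∉ fixedPoints G V) {g : G} (h : g +ᵥ x = x) : g = 0 :=
  (hsharp x x hx hx).unique h (zero_vadd G x)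

theorem vadd_left_injective
    (hsharp : SharplyTransitiveOffFixedPoints G V) {x : V} (hx : x ∉ fixedPoints G V) :
    Function.Injective (fun g : G => g +ᵥ x) := by
  intro g h hgh
  refine neg_add_eq_zero.1 (hsharp.eq_zero_of_vadd_eq_self hx ?_)
  simp only at hgh
  rw [← vadd_vadd, ← hgh, vadd_vadd, neg_add_cancel, zero_vadd]

theorem vadd_ne_self (hsharp : SharplyTransitiveOffFixedPoints G V) {x : V}
    (hx : x ∉ fixedPoints G V) {g : G} (hg : g ≠ 0) : g +ᵥ x ≠ x :=
  fun h => hg (hsharp.eq_zero_of_vadd_eq_self hx h)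

theorem card_add_card_fixedPoints [Fintype G] [Fintype V] [DecidableEq V]
    (hsharp : SharplyTransitiveOffFixedPoints G V) {x₀ : V}
    (hx₀ : x₀ ∉ fixedPoints G V) :
    Fintype.card G + #{x : V | ∀ g : G, g +ᵥ x = x} = Fintype.card V := by
  have horbit : univ.image (fun g : G => g +ᵥ x₀) =
      ({x : V | ¬ ∀ g : G, g +ᵥ x = x} : Finset V) := by
    ext y
    simp only [mem_image, mem_univ, true_and, mem_filter]
    exact ⟨fun ⟨g, hg⟩ => hg ▸ vadd_notMem_fixedPoints hx₀ g,
      fun hy => (hsharp x₀ y hx₀ hy).exists⟩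
  rw [← card_univ, ← card_image_of_injective _ (hsharp.vadd_left_injective hx₀),
    horbit, add_comm, card_filter_add_card_filter_not, card_univ]

end SharplyTransitiveOffFixedPoints

end FixedPoints

/-- The paper's "`f`-pyramidal over `G`", with `f` the number of fixed points. -/
structure IsPyramidal (G : Type*) {V : Type*} [DecidableEq V] [AddGroup G] [AddAction G V]
    (B : Finset (Finset V)) : Prop where
  isSteinerTripleSystem : IsSteinerTripleSystem B
  image_mem : ∀ g : G, ∀ b ∈ B, b.image (fun x => g +ᵥ x) ∈ B
  sharplyTransitive : SharplyTransitiveOffFixedPoints G V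

namespace IsPyramidal

variable {G V : Type*} [DecidableEq V] [AddGroup G] [AddAction G V] {B : Finset (Finset V)}

theorem exists_involution_onCommonBlock (hP : IsPyramidal G B) {x₀ p : V}
    (hx₀ : x₀ ∉ fixedPoints G V) (hp : p ∈ fixedPoints G V) :
    ∃ g : G, (g ≠ 0 ∧ g + g = 0) ∧ OnCommonBlock B p x₀ (g +ᵥ x₀) := by
  have hB := hP.isSteinerTripleSystem
  have hS := hP.sharplyTransitive
  have hpx₀ : p ≠ x₀ := ne_of_mem_of_not_mem hp hx₀
  obtain ⟨b, ⟨hb, hpb, hx₀b⟩, -⟩ := hB.existsUnique_block p x₀ hpx₀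
  obtain ⟨z, ⟨hzb, hzp, hzx₀⟩, -⟩ :=
    existsUnique_mem_ne_ne_of_card_eq_three (hB.card_eq_three b hb) hpb hx₀b hpx₀
  -- a nonzero `g` fixing `z` as well as `p` would stabilise `b` and hence also fix `x₀`
  have hz : z ∉ fixedPoints G V := by
    intro hz
    obtain ⟨g, hg⟩ := not_forall.1 hx₀
    have hgx₀ : g +ᵥ x₀ ∈ b :=
      hB.vadd_mem hP.image_mem hb hzp.symm hpb hzb (by rwa [hp g]) (by rwa [hz g]) hx₀b
    exact hg (hB.eq_of_mem_of_mem hzp.symm hb hpb hzb hgx₀ hb hpb hzb hx₀b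
      (vadd_ne_of_mem_fixedPoints hx₀ hp g)
      (vadd_ne_of_mem_fixedPoints hx₀ hz g) hpx₀.symm hzx₀.symm)
  obtain ⟨g, hgz, -⟩ := hS x₀ z hx₀ hz
  have hg : g ≠ 0 := by
    rintro rfl
    exact hzx₀ (by rw [← hgz, zero_vadd])
  have hgzb : g +ᵥ z ∈ b :=
    hB.vadd_mem hP.image_mem hb hpx₀ hpb hx₀b (by rwa [hp g]) (hgz ▸ hzb) hzb
  have hggx₀ : g +ᵥ z = x₀ :=
    hB.eq_of_mem_of_mem hzp.symm hb hpb hzb hgzb hb hpb hzb hx₀b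
      (vadd_ne_of_mem_fixedPoints hz hp g) (hS.vadd_ne_self hz hg)
      hpx₀.symm hzx₀.symm
  refine ⟨g, ⟨hg, hS.eq_zero_of_vadd_eq_self hx₀ ?_⟩, b, hb, hpb, hx₀b, hgz ▸ hzb⟩
  rw [← vadd_vadd, hgz, hggx₀]

theorem exists_mem_fixedPoints_onCommonBlock (hP : IsPyramidal G B) {x₀ : V}
    (hx₀ : x₀ ∉ fixedPoints G V) {g : G} (hg : g ≠ 0) (hgg : g + g = 0) :
    ∃ p ∈ fixedPoints G V, OnCommonBlock B p x₀ (g +ᵥ x₀) := by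
  have hB := hP.isSteinerTripleSystem
  have hS := hP.sharplyTransitive
  have hne : x₀ ≠ g +ᵥ x₀ := (hS.vadd_ne_self hx₀ hg).symm
  obtain ⟨b, ⟨hb, hx₀b, hgb⟩, -⟩ := hB.existsUnique_block x₀ (g +ᵥ x₀) hne
  obtain ⟨z, ⟨hzb, hzx₀, hzg⟩, -⟩ :=
    existsUnique_mem_ne_ne_of_card_eq_three (hB.card_eq_three b hb) hx₀b hgb hne
  have hswap : g +ᵥ (g +ᵥ x₀) = x₀ := by rw [vadd_vadd, hgg, zero_vadd]
  have hgzb : g +ᵥ z ∈ b := hB.vadd_mem hP.image_mem hb hne hx₀b hgb hgb (by rwa [hswap]) hzb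
  have hgz : g +ᵥ z = z :=
    hB.eq_of_mem_of_mem hne hb hx₀b hgb hgzb hb hx₀b hgb hzb
      (by rw [← hswap]; exact (AddAction.injective g).ne hzg) ((AddAction.injective g).ne hzx₀)
      hzx₀ hzg
  refine ⟨z, ?_, b, hb, hzb, hx₀b, hgb⟩
  by_contra hz
  exact hS.vadd_ne_self hz hg hgz

theorem card_fixedPoints_eq_card_involutions [Fintype G] [Fintype V] (hP : IsPyramidal G B)
    {x₀ : V} (hx₀ : x₀ ∉ fixedPoints G V) :
    #{x : V | ∀ g : G, g +ᵥ x = x} = #{g : G | g ≠ 0 ∧ g + g = 0} := by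
  have hB := hP.isSteinerTripleSystem
  have hS := hP.sharplyTransitive
  let R (p : V) (g : G) : Prop := OnCommonBlock B p x₀ (g +ᵥ x₀)
  refine le_antisymm (card_le_card_of_forall_subsingleton R ?_ ?_)
    (card_le_card_of_forall_subsingleton (fun g p => R p g) ?_ ?_)
  · intro p hp
    simpa using hP.exists_involution_onCommonBlock hx₀ (mem_filter.1 hp).2
  · rintro g hg p ⟨hp, b, hb, hpb, hx₀b, hgb⟩ p' ⟨hp', b', hb', hpb', hx₀b', hgb'⟩
    simp only [mem_filter, mem_univ, true_and] at hg hp hp'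
    exact hB.eq_of_mem_of_mem (hS.vadd_ne_self hx₀ hg.1).symm hb hx₀b hgb hpb
      hb' hx₀b' hgb' hpb' (ne_of_mem_of_not_mem hp hx₀)
      (vadd_ne_of_mem_fixedPoints hx₀ hp g).symm (ne_of_mem_of_not_mem hp' hx₀)
      (vadd_ne_of_mem_fixedPoints hx₀ hp' g).symm
  · intro g hg
    simp only [mem_filter, mem_univ, true_and] at hg
    simpa using hP.exists_mem_fixedPoints_onCommonBlock hx₀ hg.1 hg.2
  · rintro p hp g ⟨hg, b, hb, hpb, hx₀b, hgb⟩ g' ⟨hg', b', hb', hpb', hx₀b', hg'b'⟩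
    simp only [mem_filter, mem_univ, true_and] at hp hg hg'
    exact hS.vadd_left_injective hx₀ <|
      hB.eq_of_mem_of_mem (ne_of_mem_of_not_mem hp hx₀) hb hpb hx₀b hgb hb' hpb' hx₀b' hg'b'
        (vadd_ne_of_mem_fixedPoints hx₀ hp g) (hS.vadd_ne_self hx₀ hg.1)
        (vadd_ne_of_mem_fixedPoints hx₀ hp g') (hS.vadd_ne_self hx₀ hg'.1)

end IsPyramidal

theorem exists_card_involutions_add_one_eq_two_pow (G : Type*) [AddCommGroup G] [Fintype G] :
    ∃ m : ℕ, #{x : G | x ≠ 0 ∧ x + x = 0} + 1 = 2 ^ m := by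
  let := AddSubgroup.torsionBy.zmodModule (A := G) (n := 2)
  have hcard := Module.card_eq_pow_finrank (K := ZMod 2) (V := AddSubgroup.torsionBy G (2 : ℕ))
  rw [ZMod.card] at hcard
  refine ⟨_, Eq.trans ?_ hcard⟩
  rw [← card_insert_of_notMem (a := 0) (by simp), ← Fintype.card_coe]
  refine Fintype.card_congr (Equiv.subtypeEquivRight fun x => ?_)
  rw [AddSubgroup.torsionBy.nsmul_iff, two_nsmul, mem_insert, mem_filter]
  by_cases hx : x = 0 <;> simp [hx]

theorem card_tripleDiffs {G : Type*} [AddCommGroup G] (T : Finset G) :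
    Multiset.card (tripleDiffs T) = #T * #T - #T := by
  rw [tripleDiffs, Multiset.card_map, card_val, ← offDiag_card]
  congr 1
  ext
  simp [and_assoc]

theorem card_famDiffs {G : Type*} [AddCommGroup G] {F : Finset (Finset G)}
    (hF : ∀ T ∈ F, #T = 3) : Multiset.card (famDiffs F) = 6 * #F := by
  rw [famDiffs, Multiset.card_bind]
  change ∑ T ∈ F, Multiset.card (tripleDiffs T) = _
  rw [sum_congr rfl fun T hT => by rw [card_tripleDiffs, hF T hT], sum_const, smul_eq_mul,
    mul_comm]

theorem card_filter_forall_notMem_add_sum {G : Type*} [AddGroup G] [Fintype G]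
    {Sp : Finset (AddSubgroup G)} (hSp : Sp.Nonempty)
    (hdisj : ∀ S ∈ Sp, ∀ S' ∈ Sp, S ≠ S' → S ⊓ S' = ⊥) :
    #{g : G | ∀ S ∈ Sp, g ∉ S} + ∑ S ∈ Sp, (Nat.card S - 1) + 1 = Fintype.card G := by
  let E (S : AddSubgroup G) : Finset G := ({g | g ∈ S} : Finset G).erase 0
  have hE (S : AddSubgroup G) : #(E S) = Nat.card S - 1 := by
    rw [card_erase_of_mem (by simp), Nat.card_eq_fintype_card, Fintype.card_subtype]
  have hunion : ({g | ∃ S ∈ Sp, g ∈ S} : Finset G) = insert 0 (Sp.biUnion E) := by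
    ext g
    by_cases hg : g = 0
    · simpa [hg] using hSp.exists_mem
    · simp [E, hg]
  have hdisjE : (Sp : Set (AddSubgroup G)).PairwiseDisjoint E := by
    intro S hS S' hS' hSS'
    refine disjoint_left.2 fun g hg hg' => ?_
    simp only [E, mem_erase, mem_filter, mem_univ, true_and] at hg hg'
    have hgS : g ∈ S ⊓ S' := ⟨hg.2, hg'.2⟩
    rw [hdisj S hS S' hS' hSS'] at hgS
    exact hg.1 hgS
  have hsplit := card_filter_add_card_filter_not (s := univ) (fun g : G => ∃ S ∈ Sp, g ∈ S)
  rw [hunion, card_insert_of_notMem (by simp [E]), card_biUnion hdisjE, card_univ] at hsplit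
  simp only [not_exists, not_and] at hsplit
  rw [← hsplit, ← sum_congr rfl fun S _ => hE S]
  ring

/-- If there is a nontrivial `f`-pyramidal Steiner triple system `STS(v)` over an abelian
group `G` (the group acts as automorphisms, fixes exactly `f` points and is sharply
transitive on the remaining ones, `0 < f < v`), then `|G| = v − f`, `f` is the number of
involutions of `G`, `f = 2^m − 1` for some `m ≥ 1`, and whenever the associated difference
family is relative to a partial spread of type `{2^f, 3^0}` we get `6 ∣ v − 2f − 1`. -/
theorem stmt_19 {V : Type*} [Fintype V] [DecidableEq V]
    {G : Type*} [AddCommGroup G] [Fintype G] [AddAction G V]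
    (v f : ℕ) (hv : Fintype.card V = v) (hf0 : 0 < f) (hfv : f < v)
    (B : Finset (Finset V))
    (hSTS3 : ∀ b ∈ B, b.card = 3)
    (hSTSpair : ∀ x y : V, x ≠ y → ∃! b, b ∈ B ∧ x ∈ b ∧ y ∈ b)
    (hAut : ∀ g : G, ∀ b ∈ B, b.image (fun x => g +ᵥ x) ∈ B)
    (hfix : (Finset.univ.filter (fun x : V => ∀ g : G, g +ᵥ x = x)).card = f)
    (hsharp : ∀ x y : V, (¬ ∀ g : G, g +ᵥ x = x) → (¬ ∀ g : G, g +ᵥ y = y) →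
      ∃! g : G, g +ᵥ x = y) :
    Fintype.card G = v - f ∧
    f = (Finset.univ.filter (fun x : G => x ≠ 0 ∧ x + x = 0)).card ∧
    (∃ m : ℕ, 1 ≤ m ∧ f = 2 ^ m - 1) ∧
    (∀ (Sp : Finset (AddSubgroup G)) (F : Finset (Finset G)),
      (∀ S ∈ Sp, ∀ S' ∈ Sp, S ≠ S' → S ⊓ S' = ⊥) →
      (∀ S ∈ Sp, Nat.card ↥S = 2) → Sp.card = f →
      (∀ T ∈ F, T.card = 3) →
      famDiffs F = (Finset.univ.filter (fun g : G => ∀ S ∈ Sp, g ∉ S)).val →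
      (6 : ℤ) ∣ ((v : ℤ) - 2 * (f : ℤ) - 1)) := by
  have hP : IsPyramidal G B := ⟨⟨hSTS3, hSTSpair⟩, hAut, hsharp⟩
  obtain ⟨x₀, hx₀⟩ : ∃ x₀ : V, x₀ ∉ fixedPoints G V := by
    by_contra! h
    have hall : ({x : V | ∀ g : G, g +ᵥ x = x} : Finset V) = univ :=
      filter_true_of_mem fun x _ => h x
    rw [hall, card_univ] at hfix
    omega
  have hcard := hP.sharplyTransitive.card_add_card_fixedPoints hx₀
  have hinv := hP.card_fixedPoints_eq_card_involutions hx₀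
  rw [hfix] at hcard hinv
  obtain ⟨m, hm⟩ := exists_card_involutions_add_one_eq_two_pow G
  refine ⟨by omega, hinv, ⟨m, Nat.one_le_iff_ne_zero.2 ?_, by omega⟩, ?_⟩
  · rintro rfl
    omega
  intro Sp F hSpInt hSp2 hSpcard hF3 hdiff
  have hspread := card_filter_forall_notMem_add_sum (card_pos.1 (hSpcard ▸ hf0)) hSpInt
  rw [sum_congr rfl fun S hS => by rw [hSp2 S hS]] at hspread
  simp only [sum_const, smul_eq_mul, Nat.reduceSub, mul_one, hSpcard] at hspread
  have hdiffs := card_famDiffs hF3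
  rw [hdiff, card_val] at hdiffs
  exact ⟨#F, by omega⟩
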